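/- Suppose R = (X, R₀, Y, R₀^∨) is a root datum and R₀' ⊂ R₀ is an irreducible component of R₀. Put X' = X ∩ ℝR₀' and Y' = Y ∩ ℝ(R₀')^∨. Assume either (i) X' = P(R₀') (the weight lattice of R₀'), or (ii) there exists α ∈ R₀' with α^∨ ∈ 2Y. Then R' = (X', R₀', Y', (R₀')^∨) is a root datum which is a direct summand of R; in case (ii), R' has type C_n^{(1)}. -/

import Mathlib

noncomputable section

namespace SpecCorr

/-- The saturation of the `ℤ`-span of a set `s` in a lattice `X`:
`{x | n•x ∈ span ℤ s for some n ≠ 0}`.  For `s = R₀'` this is the lattice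
`X' = X ∩ ℝR₀'`. -/
def satSpan (X : Type) [AddCommGroup X] (s : Set X) : Submodule ℤ X where
  carrier := {x | ∃ n : ℤ, n ≠ 0 ∧ n • x ∈ Submodule.span ℤ s}
  zero_mem' := ⟨1, one_ne_zero, by simp⟩
  add_mem' := by
    rintro a b ⟨n, hn, ha⟩ ⟨m, hm, hb⟩
    refine ⟨n * m, mul_ne_zero hn hm, ?_⟩
    have h1 : (n * m) • a = m • (n • a) := by rw [mul_comm, mul_smul]
    have h2 : (n * m) • b = n • (m • b) := by rw [mul_smul]
    rw [smul_add, h1, h2]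
    exact Submodule.add_mem _ (Submodule.smul_mem _ _ ha) (Submodule.smul_mem _ _ hb)
  smul_mem' := by
    rintro c a ⟨n, hn, ha⟩
    exact ⟨n, hn, by rw [smul_comm]; exact Submodule.smul_mem _ c ha⟩

/-- A (reduced, semisimple-flavoured) root datum `R = (X, R₀, Y, R₀^∨)`:
lattices `X`, `Y` in perfect duality via `pair`, a reduced root system `R₀ ⊂ X`
with coroots `coroot α ∈ Y`. -/
structure RootDatum where
  X : Type
  Y : Type
  [deceqX : DecidableEq X]
  [grpX : AddCommGroup X]
  [freeX : Module.Free ℤ X]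
  [finX : Module.Finite ℤ X]
  [grpY : AddCommGroup Y]
  [freeY : Module.Free ℤ Y]
  [finY : Module.Finite ℤ Y]
  /-- the perfect pairing `X × Y → ℤ` -/
  pair : X →+ Y →+ ℤ
  pair_perfX : ∀ f : Y →+ ℤ, ∃! x : X, ∀ y : Y, pair x y = f y
  pair_perfY : ∀ f : X →+ ℤ, ∃! y : Y, ∀ x : X, pair x y = f x
  /-- the root system `R₀ ⊂ X` -/
  R0 : Finset X
  /-- the coroot `α^∨ ∈ Y` of a root `α ∈ R₀` -/
  coroot : X → Y
  zero_not_mem : (0 : X) ∉ R0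
  pair_self : ∀ α ∈ R0, pair α (coroot α) = 2
  neg_mem : ∀ α ∈ R0, -α ∈ R0
  reduced : ∀ α ∈ R0, ∀ c : ℤ, c • α ∈ R0 → c = 1 ∨ c = -1
  refl_stable : ∀ α ∈ R0, ∀ β ∈ R0, β - pair β (coroot α) • α ∈ R0
  corefl_stable : ∀ α ∈ R0, ∀ β ∈ R0,
    ∃ γ ∈ R0, coroot γ = coroot β - pair α (coroot β) • coroot α

attribute [instance] RootDatum.deceqX RootDatum.grpX RootDatum.freeX RootDatum.finX
  RootDatum.grpY RootDatum.freeY RootDatum.finY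

namespace RootDatum

variable (R : RootDatum)

/-- `R₀' ⊆ R₀` is an irreducible component of `R₀`: it is orthogonal to its complement
and admits no further nontrivial orthogonal decomposition. -/
def IsIrreducibleComponent (R' : Finset R.X) : Prop :=
  R'.Nonempty ∧ R' ⊆ R.R0 ∧
  (∀ α ∈ R', ∀ β ∈ R.R0, β ∉ R' → R.pair α (R.coroot β) = 0 ∧ R.pair β (R.coroot α) = 0) ∧
  (∀ A B : Finset R.X, A ∪ B = R' → A ∩ B = ∅ → A.Nonempty → B.Nonempty →
    ∃ α ∈ A, ∃ β ∈ B, R.pair α (R.coroot β) ≠ 0)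

/-- The lattice `X' = X ∩ ℝR₀'`. -/
def Xsub (R' : Finset R.X) : Submodule ℤ R.X := satSpan R.X (R' : Set R.X)

/-- The lattice `Y' = Y ∩ ℝ(R₀')^∨`. -/
def Ysub (R' : Finset R.X) : Submodule ℤ R.Y := satSpan R.Y (R.coroot '' (R' : Set R.X))

/-- `X' = P(R₀')`, i.e. `X'` realizes every `ℤ`-linear functional on the coroot
lattice `Q((R₀')^∨)` of the component (so `X'` is the full weight lattice of `R₀'`). -/
def XsubIsWeightLattice (R' : Finset R.X) : Prop :=
  ∀ f : ↥(Submodule.span ℤ (R.coroot '' (R' : Set R.X))) →ₗ[ℤ] ℤ,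
    ∃ x ∈ R.Xsub R', ∀ y : ↥(Submodule.span ℤ (R.coroot '' (R' : Set R.X))),
      R.pair x y = f y

/-- The root datum `R' = (X', R₀', Y', (R₀')^∨)` is a *direct summand* of `R`. -/
def IsDirectSummand (R' : Finset R.X) : Prop :=
  ∃ (X2 : Submodule ℤ R.X) (Y2 : Submodule ℤ R.Y),
    IsCompl (R.Xsub R') X2 ∧ IsCompl (R.Ysub R') Y2 ∧
    (∀ α ∈ R.R0, α ∉ R' → α ∈ X2) ∧
    (∀ α ∈ R.R0, α ∉ R' → R.coroot α ∈ Y2) ∧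
    (∀ x ∈ R.Xsub R', ∀ y ∈ Y2, R.pair x y = 0) ∧
    (∀ x ∈ X2, ∀ y ∈ R.Ysub R', R.pair x y = 0)

/-- `R'` has type `C_n^{(1)}`: `R₀'` is of type `B_n` (it contains a root whose coroot
is divisible by `2` in `Y'`) and `X'` equals the root lattice `Q(R₀')`. -/
def IsTypeC1 (R' : Finset R.X) : Prop :=
  R.Xsub R' = Submodule.span ℤ (R' : Set R.X) ∧
  ∃ α ∈ R', ∃ y ∈ R.Ysub R', R.coroot α = y + y

end RootDatum

/-!
The root lattice `Q(R₀')` and the coroot lattice `Q((R₀')^∨)` are in nondegenerate duality (the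
component is itself a finite root pairing, whose root form is anisotropic), so `X'` meets the
orthogonal `X₂` of `(R₀')^∨` trivially, and dually `Y'` meets the orthogonal `Y₂` of `R₀'`
trivially. `X = X' + X₂` says that every functional `⟨x, ·⟩` on `Q((R₀')^∨)` is realised by an
element of `X'`, which is hypothesis (i). In case (ii) let `E ⊆ R₀'` be the roots with `α^∨ ∈ 2Y`.
The rank-two classification shows that the roots of `E` are mutually orthogonal up to sign, that
`⟨α, α^∨/2⟩ = 1`, and, with irreducibility, that every coroot of `R₀'` lies in the span of the
`α^∨/2`; hence `x' = ∑ ⟨x, α^∨/2⟩ α`, over one root of each pair `±α` in `E`, lies in `Q(R₀')` and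
realises `⟨x, ·⟩`, which also gives `X' = Q(R₀')`. Finally `Y = Y' + Y₂` follows from
`X = X' ⊕ X₂` by duality and a rank count.
-/

end SpecCorr

namespace RootPairing

open Submodule

variable {ι M N : Type*} [AddCommGroup M] [AddCommGroup N] (P : RootPairing ι ℤ M N)

lemma pairingIn_int_eq_pairing (i j : ι) : P.pairingIn ℤ i j = P.pairing i j := by
  simpa using P.algebraMap_pairingIn ℤ i j

lemma isReduced_of_root_eq_smul [Finite ι] [Module.IsTorsionFree ℤ M]
    (h : ∀ i j (c : ℤ), P.root i = c • P.root j → c = 1 ∨ c = -1) : P.IsReduced where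
  eq_or_eq_neg i j hij := by
    have hji : ¬ LinearIndependent ℤ ![P.root j, P.root i] := by
      rwa [LinearIndependent.pair_symm_iff]
    have h4 : P.pairing i j * P.pairing j i = 4 :=
      (P.coxeterWeight_eq_four_iff_not_linearIndependent).mpr hij
    have key : ∀ {a b : ℤ} {k l : ι}, a • P.root k = (2 : ℤ) • P.root l → a = b + b →
        P.root l = P.root k ∨ P.root l = -P.root k := by
      intro a b k l hkl hab
      have hb : P.root l = b • P.root k := by
        apply smul_right_injective M (two_ne_zero (α := ℤ))
        change (2 : ℤ) • P.root l = (2 : ℤ) • (b • P.root k)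
        rw [← hkl, hab, smul_smul, two_mul]
      rcases h l k b hb with rfl | rfl <;> simp [hb]
    have heven : Even (P.pairing i j * P.pairing j i) := h4 ▸ ⟨2, rfl⟩
    rcases Int.even_mul.mp heven with ⟨b, hb⟩ | ⟨b, hb⟩
    · exact key (P.pairing_smul_root_eq_of_not_linearIndependent hji) hb
    · rcases key (P.pairing_smul_root_eq_of_not_linearIndependent hij) hb with h' | h'
      · exact Or.inl h'.symm
      · exact Or.inr (by rw [h', neg_neg])

lemma pairing_eq_two_mul_of_two_dvd [Finite ι] [P.IsReduced] {i j : ι}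
    (hne : P.root j ≠ P.root i) (hne' : P.root j ≠ -P.root i)
    (h2 : 2 ∣ P.pairing j i) (h0 : P.pairing j i ≠ 0) :
    P.pairing j i = 2 * P.pairing i j ∧ (P.pairing i j = 1 ∨ P.pairing i j = -1) := by
  have h := P.pairingIn_pairingIn_mem_set_of_isCrystal_of_isRed' j i hne hne'
  simp only [pairingIn_int_eq_pairing, Set.mem_insert_iff, Set.mem_singleton_iff,
    Prod.mk.injEq] at h
  omega

def evenCoroots : Set ι := {i | ∃ h : N, P.coroot i = (2 : ℤ) • h}

def halfCoroots : Set N := {h | ∃ i, P.coroot i = (2 : ℤ) • h}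

variable {P}

lemma two_dvd_pairing_of_mem_evenCoroots {i : ι} (hi : i ∈ P.evenCoroots) (j : ι) :
    2 ∣ P.pairing j i := by
  obtain ⟨h, hh⟩ := hi
  exact ⟨P.toLinearMap (P.root j) h, by rw [← root_coroot_eq_pairing, hh, map_smul, smul_eq_mul]⟩

lemma pairing_eq_zero_of_mem_evenCoroots [Finite ι] [P.IsReduced] {i j : ι}
    (hi : i ∈ P.evenCoroots) (hj : j ∈ P.evenCoroots)
    (hne : P.root j ≠ P.root i) (hne' : P.root j ≠ -P.root i) : P.pairing j i = 0 := by
  by_contra h0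
  have := two_dvd_pairing_of_mem_evenCoroots hj i
  have := P.pairing_eq_two_mul_of_two_dvd hne hne' (two_dvd_pairing_of_mem_evenCoroots hi j) h0
  omega

lemma mem_span_of_pairing_ne_zero [Finite ι] [P.IsReduced] {i j : ι} (hi : i ∈ P.evenCoroots)
    (hji : P.pairing j i ≠ 0) :
    P.root j ∈ span ℤ (P.root '' P.evenCoroots) ∧ P.coroot j ∈ span ℤ P.halfCoroots := by
  obtain ⟨h, hh⟩ := hi
  have hiE : P.root i ∈ span ℤ (P.root '' P.evenCoroots) := subset_span ⟨i, ⟨h, hh⟩, rfl⟩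
  have hH : h ∈ span ℤ P.halfCoroots := subset_span ⟨i, hh⟩
  by_cases hij : P.root j = P.root i
  · rw [P.root.injective hij, hh]
    exact ⟨hiE, smul_mem _ _ hH⟩
  by_cases hij' : P.root j = -P.root i
  · rw [hij', (P.coroot_eq_neg_iff).mpr ((P.root_eq_neg_iff).mp hij'), hh]
    exact ⟨neg_mem hiE, neg_mem (smul_mem _ _ hH)⟩
  -- otherwise, with `ε = ±1`, `s_j α_i = α_i - ε α_j` is a root with coroot `2 (h - ε α_j^∨)`
  obtain ⟨h2, hε⟩ :=
    P.pairing_eq_two_mul_of_two_dvd hij hij' (two_dvd_pairing_of_mem_evenCoroots ⟨h, hh⟩ j) hji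
  set ε := P.pairing i j
  set k := P.reflectionPerm j i
  have hroot : P.root k = P.root i - ε • P.root j := P.root_reflectionPerm j i
  have hcoroot : P.coroot k = (2 : ℤ) • (h - ε • P.coroot j) := by
    rw [P.coroot_reflectionPerm j i, coreflection_apply_coroot, hh, h2]
    module
  have hrootj : P.root j = ε • (P.root i - P.root k) := by
    rw [hroot]
    rcases hε with hε | hε <;> rw [hε] <;> module
  have hcorootj : P.coroot j = ε • (h - (h - ε • P.coroot j)) := by
    rcases hε with hε | hε <;> rw [hε] <;> module
  rw [hrootj, hcorootj]
  exact ⟨smul_mem _ _ (sub_mem hiE (subset_span ⟨k, ⟨_, hcoroot⟩, rfl⟩)),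
    smul_mem _ _ (sub_mem hH (subset_span ⟨k, hcoroot⟩))⟩

lemma exists_mem_evenCoroots_pairing_ne_zero [Finite ι] [P.IsReduced]
    (hconn : ∀ s : Set ι, (∀ i ∈ s, ∀ j ∉ s, P.pairing i j = 0) → s = ∅ ∨ s = Set.univ)
    {i₀ : ι} (hi₀ : i₀ ∈ P.evenCoroots) (j : ι) : ∃ i ∈ P.evenCoroots, P.pairing j i ≠ 0 := by
  set s := {j | ∀ i ∈ P.evenCoroots, P.pairing j i = 0}
  have hsep : ∀ a ∈ s, ∀ b ∉ s, P.pairing a b = 0 := by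
    intro a ha b hb
    simp only [s, Set.mem_ofPred_eq, not_forall] at hb
    obtain ⟨i, hi, hbi⟩ := hb
    have hker : span ℤ (P.root '' P.evenCoroots) ≤ LinearMap.ker (P.coroot' a) := by
      rw [span_le]
      rintro - ⟨k, hk, rfl⟩
      simpa [pairing_eq_zero_iff' (i := a)] using ha k hk
    simpa [pairing_eq_zero_iff' (i := a)] using hker (mem_span_of_pairing_ne_zero hi hbi).1
  rcases hconn s hsep with hs | hs
  · have hj : j ∉ s := hs ▸ Set.notMem_empty j
    simpa [s] using hj
  · simpa using (hs ▸ Set.mem_univ i₀ : i₀ ∈ s) i₀ hi₀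

lemma exists_mem_rootSpan_forall_sub_coroot_eq_zero [Finite ι] [P.IsReduced]
    (hconn : ∀ s : Set ι, (∀ i ∈ s, ∀ j ∉ s, P.pairing i j = 0) → s = ∅ ∨ s = Set.univ)
    {i₀ : ι} (hi₀ : i₀ ∈ P.evenCoroots) (x : M) :
    ∃ x' ∈ P.rootSpan ℤ, ∀ j, P.toLinearMap (x - x') (P.coroot j) = 0 := by
  classical
  have := Fintype.ofFinite ι
  choose! half hhalf using fun i (hi : i ∈ P.evenCoroots) => hi
  -- one root out of each pair `±α` with even coroot
  set Eb := Finset.univ.filter fun i => i ∈ P.evenCoroots ∧ WellOrderingRel (P.root i) (-P.root i)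
  have hEbE : ∀ i ∈ Eb, i ∈ P.evenCoroots := fun i hi => (Finset.mem_filter.mp hi).2.1
  have hroot_half : ∀ i ∈ Eb, ∀ k ∈ Eb,
      P.toLinearMap (P.root i) (half k) = if i = k then 1 else 0 := by
    intro i hi k hk
    have h2 : 2 * P.toLinearMap (P.root i) (half k) = P.pairing i k := by
      rw [← root_coroot_eq_pairing, hhalf k (hEbE k hk), map_smul, smul_eq_mul]
    split_ifs with hik
    · subst hik
      rw [pairing_same] at h2
      omega
    · have hne' : P.root i ≠ -P.root k := by
        intro h
        have hi' := (Finset.mem_filter.mp hi).2.2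
        rw [h, neg_neg] at hi'
        exact asymm hi' (Finset.mem_filter.mp hk).2.2
      rw [pairing_eq_zero_of_mem_evenCoroots (hEbE k hk) (hEbE i hi)
        (fun h => hik (P.root.injective h)) hne'] at h2
      omega
  set x' := ∑ i ∈ Eb, P.toLinearMap x (half i) • P.root i
  refine ⟨x', sum_mem fun i _ => smul_mem _ _ (subset_span ⟨i, rfl⟩), ?_⟩
  have hEb : ∀ k ∈ Eb, P.toLinearMap (x - x') (P.coroot k) = 0 := by
    intro k hk
    have hsum : ∑ i ∈ Eb, P.toLinearMap x (half i) * P.toLinearMap (P.root i) (half k) =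
        P.toLinearMap x (half k) := by
      rw [Finset.sum_congr rfl fun i hi => by rw [hroot_half i hi k hk]]
      simp [hk]
    simp [x', hhalf k (hEbE k hk), map_sum, hsum]
  have hE : ∀ k ∈ P.evenCoroots, P.toLinearMap (x - x') (P.coroot k) = 0 := by
    intro k hk
    rcases trichotomous_of WellOrderingRel (P.root k) (-P.root k) with h | h | h
    · exact hEb k (Finset.mem_filter.mpr ⟨Finset.mem_univ _, hk, h⟩)
    · exact absurd ((P.root_eq_neg_iff).mp h) (P.ne_neg k)
    · have hk' : P.reflectionPerm k k ∈ Eb := by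
        obtain ⟨h', hh'⟩ := hk
        refine Finset.mem_filter.mpr ⟨Finset.mem_univ _, ⟨-h', ?_⟩, by simpa using h⟩
        rw [coroot_reflectionPerm, coreflection_apply_self, hh', smul_neg]
      have := hEb _ hk'
      rwa [coroot_reflectionPerm, coreflection_apply_self, map_neg, neg_eq_zero] at this
  have hH : ∀ h ∈ P.halfCoroots, P.toLinearMap (x - x') h = 0 := by
    rintro h ⟨k, hk⟩
    have := hE k ⟨h, hk⟩
    rw [hk, map_smul, smul_eq_mul] at this
    omega
  intro j
  obtain ⟨i, hi, hji⟩ := exists_mem_evenCoroots_pairing_ne_zero hconn hi₀ j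
  exact (span_le.mpr hH : span ℤ P.halfCoroots ≤ LinearMap.ker _)
    (mem_span_of_pairing_ne_zero hi hji).2

end RootPairing

theorem LinearMap.exists_smul_mem_range_flip {U V : Type*} [AddCommGroup U] [Module.Free ℤ U]
    [Module.Finite ℤ U] [AddCommGroup V] [Module.Free ℤ V] [Module.Finite ℤ V]
    (p : U →ₗ[ℤ] V →ₗ[ℤ] ℤ) (hp : Function.Injective p) (hp' : Function.Injective p.flip)
    (f : U →ₗ[ℤ] ℤ) : ∃ n : ℤ, n ≠ 0 ∧ n • f ∈ LinearMap.range p.flip := by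
  have hU := LinearMap.finrank_le_finrank_of_injective hp
  have hV := LinearMap.finrank_le_finrank_of_injective hp'
  rw [Module.finrank_linearMap_self] at hU hV
  have hrange := (LinearMap.range p.flip).finrank_quotient_add_finrank
  rw [LinearMap.finrank_range_of_inj hp', Module.finrank_linearMap_self] at hrange
  have htors : Module.IsTorsion ℤ ((U →ₗ[ℤ] ℤ) ⧸ LinearMap.range p.flip) :=
    Module.finrank_eq_zero_iff_isTorsion.mp (by omega)
  obtain ⟨⟨n, hn⟩, hnf⟩ := @htors (Submodule.Quotient.mk f)
  refine ⟨n, nonZeroDivisors.ne_zero hn, ?_⟩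
  rwa [Submonoid.mk_smul, ← Submodule.Quotient.mk_smul, Submodule.Quotient.mk_eq_zero] at hnf

namespace SpecCorr

open Submodule

section satSpan

variable {X : Type} [AddCommGroup X] {s : Set X}

lemma span_le_satSpan : span ℤ s ≤ satSpan X s :=
  fun _ hx => ⟨1, one_ne_zero, by rwa [one_smul]⟩

lemma satSpan_le_ker {f : X →ₗ[ℤ] ℤ} (h : span ℤ s ≤ LinearMap.ker f) :
    satSpan X s ≤ LinearMap.ker f := by
  rintro x ⟨n, hn, hx⟩
  have hfx := h hx
  simp only [LinearMap.mem_ker, map_zsmul, smul_eq_mul] at hfx ⊢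
  exact (mul_eq_zero.mp hfx).resolve_left hn

lemma disjoint_satSpan [Module.IsTorsionFree ℤ X] {N : Submodule ℤ X}
    (h : Disjoint (span ℤ s) N) : Disjoint (satSpan X s) N := by
  rw [disjoint_def] at h ⊢
  rintro x ⟨n, hn, hx⟩ hxN
  exact (smul_eq_zero.mp (h _ hx (N.smul_mem n hxN))).resolve_left hn

end satSpan

namespace RootDatum

variable (R : RootDatum)

def pairing : R.X →ₗ[ℤ] R.Y →ₗ[ℤ] ℤ :=
  LinearMap.mk₂ ℤ (fun x y => R.pair x y) (by simp) (by simp) (by simp) (by simp)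

@[simp]
lemma pairing_apply (x : R.X) (y : R.Y) : R.pairing x y = R.pair x y := rfl

instance : R.pairing.IsPerfPair where
  bijective_left := (Function.bijective_iff_existsUnique _).2 fun f => by
    simpa only [LinearMap.ext_iff, pairing_apply, LinearMap.toAddMonoidHom_coe] using
      R.pair_perfX f.toAddMonoidHom
  bijective_right := (Function.bijective_iff_existsUnique _).2 fun f => by
    simpa only [LinearMap.ext_iff, LinearMap.flip_apply, pairing_apply,
      LinearMap.toAddMonoidHom_coe] using R.pair_perfY f.toAddMonoidHom

lemma eq_zero_of_forall_pair_eq_zero {y : R.Y} (h : ∀ x, R.pair x y = 0) : y = 0 :=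
  (LinearMap.IsPerfPair.bijective_right R.pairing).injective (by ext x; simp [h])

def perpX (R' : Finset R.X) : Submodule ℤ R.X :=
  ⨅ α ∈ R', LinearMap.ker (R.pairing.flip (R.coroot α))

def perpY (R' : Finset R.X) : Submodule ℤ R.Y :=
  ⨅ α ∈ R', LinearMap.ker (R.pairing α)

variable {R} {R' : Finset R.X}

@[simp]
lemma mem_perpX {x : R.X} : x ∈ R.perpX R' ↔ ∀ α ∈ R', R.pair x (R.coroot α) = 0 := by
  simp [perpX]

@[simp]
lemma mem_perpY {y : R.Y} : y ∈ R.perpY R' ↔ ∀ α ∈ R', R.pair α y = 0 := by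
  simp [perpY]

lemma pair_eq_zero_of_mem_Xsub_of_mem_perpY {x : R.X} {y : R.Y} (hx : x ∈ R.Xsub R')
    (hy : y ∈ R.perpY R') : R.pair x y = 0 :=
  satSpan_le_ker (f := R.pairing.flip y)
    (span_le.mpr fun α hα => by simpa using mem_perpY.mp hy α hα) hx

lemma pair_eq_zero_of_mem_perpX_of_mem_Ysub {x : R.X} {y : R.Y} (hx : x ∈ R.perpX R')
    (hy : y ∈ R.Ysub R') : R.pair x y = 0 :=
  satSpan_le_ker (f := R.pairing x) (span_le.mpr <| by
    rintro - ⟨α, hα, rfl⟩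
    simpa using mem_perpX.mp hx α hα) hy

lemma XsubIsWeightLattice.codisjoint_Xsub_perpX (hw : R.XsubIsWeightLattice R') :
    Codisjoint (R.Xsub R') (R.perpX R') := by
  rw [codisjoint_iff, eq_top_iff]
  intro x _
  obtain ⟨x', hx', hx'x⟩ := hw ((R.pairing x).comp (span ℤ (R.coroot '' R')).subtype)
  refine mem_sup.mpr ⟨x', hx', x - x', mem_perpX.mpr fun α hα => ?_, add_sub_cancel _ _⟩
  have := hx'x ⟨R.coroot α, subset_span ⟨α, hα, rfl⟩⟩
  simp_all

namespace IsIrreducibleComponent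

lemma reflection_mem (hcomp : R.IsIrreducibleComponent R') {α β : R.X} (hα : α ∈ R')
    (hβ : β ∈ R') : β - R.pair β (R.coroot α) • α ∈ R' := by
  obtain ⟨-, hsub, horth, -⟩ := hcomp
  set γ := β - R.pair β (R.coroot α) • α
  have hγ := R.refl_stable α (hsub hα) β (hsub hβ)
  by_contra hγR'
  have h2 := R.pair_self γ hγ
  have h0 : R.pair γ (R.coroot γ) = 0 := by
    simp [γ, (horth β hβ γ hγ hγR').1, (horth α hα γ hγ hγR').1]
  omega

lemma coreflection_mem (hcomp : R.IsIrreducibleComponent R') {α β : R.X} (hα : α ∈ R')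
    (hβ : β ∈ R') : R.coroot β - R.pair α (R.coroot β) • R.coroot α ∈ R.coroot '' R' := by
  obtain ⟨γ, hγ, hγc⟩ := R.corefl_stable α (hcomp.2.1 hα) β (hcomp.2.1 hβ)
  by_cases hγR' : γ ∈ R'
  · exact ⟨γ, hγR', hγc⟩
  -- otherwise `⟨α, γ^∨⟩ = -⟨α, β^∨⟩` vanishes, so the coreflection fixes `β^∨`
  have h0 := (hcomp.2.2.1 α hα γ hγ hγR').1
  rw [hγc] at h0
  simp only [map_sub, map_zsmul, R.pair_self α (hcomp.2.1 hα), smul_eq_mul] at h0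
  have hzero : R.pair α (R.coroot β) = 0 := by linarith
  exact ⟨β, hβ, by rw [hzero, zero_smul, sub_zero]⟩

lemma mapsTo_preReflection (hcomp : R.IsIrreducibleComponent R') {α : R.X} (hα : α ∈ R') :
    Set.MapsTo (Module.preReflection α (R.pairing.flip (R.coroot α))) R' R' := fun _ hβ => by
  simpa [Module.preReflection_apply] using hcomp.reflection_mem hα hβ

lemma injOn_coroot (hcomp : R.IsIrreducibleComponent R') : Set.InjOn R.coroot R' :=
  fun α hα β hβ h => by
    have : IsAddTorsionFree R.X := .of_isTorsionFree ℤ R.X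
    have hα2 := R.pair_self α (hcomp.2.1 hα)
    have hβ2 := R.pair_self β (hcomp.2.1 hβ)
    refine Module.eq_of_mapsTo_reflection_of_mem (f := R.pairing.flip (R.coroot α))
      (g := R.pairing.flip (R.coroot β)) R'.finite_toSet ?_ ?_ ?_ ?_
      (hcomp.mapsTo_preReflection hα) (hcomp.mapsTo_preReflection hβ) hβ <;> simp_all

def rootPairing (hcomp : R.IsIrreducibleComponent R') : RootPairing R' ℤ R.X R.Y :=
  .mk' R.pairing (Function.Embedding.subtype _)
    ⟨fun α => R.coroot α, fun α β h => Subtype.ext (hcomp.injOn_coroot α.2 β.2 h)⟩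
    (fun α => R.pair_self α (hcomp.2.1 α.2))
    (by
      rintro α - ⟨β, rfl⟩
      exact ⟨⟨_, hcomp.reflection_mem α.2 β.2⟩, rfl⟩)
    (by
      rintro α - ⟨β, rfl⟩
      obtain ⟨γ, hγ, hγc⟩ := hcomp.coreflection_mem α.2 β.2
      exact ⟨⟨γ, hγ⟩, hγc⟩)

@[simp]
lemma rootPairing_root (hcomp : R.IsIrreducibleComponent R') (α : R') :
    hcomp.rootPairing.root α = α := rfl

@[simp]
lemma rootPairing_coroot (hcomp : R.IsIrreducibleComponent R') (α : R') :
    hcomp.rootPairing.coroot α = R.coroot α := rfl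

@[simp]
lemma rootPairing_toLinearMap (hcomp : R.IsIrreducibleComponent R') :
    hcomp.rootPairing.toLinearMap = R.pairing := rfl

lemma rootSpan_rootPairing (hcomp : R.IsIrreducibleComponent R') :
    hcomp.rootPairing.rootSpan ℤ = span ℤ R' := by
  change span ℤ (Set.range (Subtype.val : R' → R.X)) = _
  rw [Subtype.range_coe]

lemma corootSpan_rootPairing (hcomp : R.IsIrreducibleComponent R') :
    hcomp.rootPairing.corootSpan ℤ = span ℤ (R.coroot '' R') := by
  change span ℤ (Set.range fun α : R' => R.coroot α) = _
  rw [Set.range_comp' R.coroot Subtype.val, Subtype.range_coe]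

lemma isReduced_rootPairing (hcomp : R.IsIrreducibleComponent R') :
    hcomp.rootPairing.IsReduced :=
  RootPairing.isReduced_of_root_eq_smul _ fun α β c h => by
    simp only [rootPairing_root] at h
    exact R.reduced β (hcomp.2.1 β.2) c (h ▸ hcomp.2.1 α.2)

lemma rootPairing_connected (hcomp : R.IsIrreducibleComponent R') (s : Set R')
    (hs : ∀ α ∈ s, ∀ β ∉ s, hcomp.rootPairing.pairing α β = 0) :
    s = ∅ ∨ s = Set.univ := by
  classical
  by_contra hne
  rw [not_or, ← Ne, ← Set.nonempty_iff_ne_empty, ← Ne, Set.ne_univ_iff_exists_notMem] at hne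
  obtain ⟨⟨a, ha⟩, ⟨b, hb⟩⟩ := hne
  set p : R.X → Prop := fun x => ∃ hx : x ∈ R', ⟨x, hx⟩ ∈ s
  obtain ⟨α, hα, β, hβ, hαβ⟩ := hcomp.2.2.2 (R'.filter p) (R'.filter (¬ p ·))
    (Finset.filter_union_filter_not_eq _ _)
    (Finset.disjoint_iff_inter_eq_empty.mp (Finset.disjoint_filter_filter_not _ _ _))
    ⟨a, Finset.mem_filter.mpr ⟨a.2, a.2, ha⟩⟩ ⟨b, Finset.mem_filter.mpr ⟨b.2, fun ⟨_, h⟩ => hb h⟩⟩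
  obtain ⟨-, hαR', hαs⟩ := Finset.mem_filter.mp hα
  obtain ⟨hβR', hβs⟩ := Finset.mem_filter.mp hβ
  exact hαβ (hs ⟨α, hαR'⟩ hαs ⟨β, hβR'⟩ fun h => hβs ⟨hβR', h⟩)

lemma eq_zero_of_mem_span_of_forall_pair_coroot (hcomp : R.IsIrreducibleComponent R') {x : R.X}
    (hx : x ∈ span ℤ R') (h : ∀ α ∈ R', R.pair x (R.coroot α) = 0) : x = 0 :=
  hcomp.rootPairing.eq_zero_of_mem_rootSpan_of_rootForm_self_eq_zero
    (by rwa [rootSpan_rootPairing]) (by simp [RootPairing.rootForm_apply_apply, h])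

lemma eq_zero_of_mem_span_coroot_of_forall_pair (hcomp : R.IsIrreducibleComponent R') {y : R.Y}
    (hy : y ∈ span ℤ (R.coroot '' R')) (h : ∀ α ∈ R', R.pair α y = 0) : y = 0 :=
  hcomp.rootPairing.flip.eq_zero_of_mem_rootSpan_of_rootForm_self_eq_zero
    (by rwa [← corootSpan_rootPairing hcomp] at hy) (by simp [RootPairing.rootForm_apply_apply, h])

lemma disjoint_Xsub_perpX (hcomp : R.IsIrreducibleComponent R') :
    Disjoint (R.Xsub R') (R.perpX R') :=
  disjoint_satSpan <| disjoint_def.mpr fun _ hx hx' =>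
    hcomp.eq_zero_of_mem_span_of_forall_pair_coroot hx (mem_perpX.mp hx')

lemma disjoint_Ysub_perpY (hcomp : R.IsIrreducibleComponent R') :
    Disjoint (R.Ysub R') (R.perpY R') :=
  disjoint_satSpan <| disjoint_def.mpr fun _ hy hy' =>
    hcomp.eq_zero_of_mem_span_coroot_of_forall_pair hy (mem_perpY.mp hy')

lemma codisjoint_span_perpX (hcomp : R.IsIrreducibleComponent R')
    (h2 : ∃ α ∈ R', ∃ y : R.Y, R.coroot α = y + y) :
    Codisjoint (span ℤ (R' : Set R.X)) (R.perpX R') := by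
  obtain ⟨α, hα, y, hy⟩ := h2
  have := hcomp.isReduced_rootPairing
  rw [codisjoint_iff, eq_top_iff]
  intro x _
  obtain ⟨x', hx', hker⟩ := hcomp.rootPairing.exists_mem_rootSpan_forall_sub_coroot_eq_zero
    hcomp.rootPairing_connected (i₀ := ⟨α, hα⟩) ⟨y, by simp [hy, two_smul]⟩ x
  rw [rootSpan_rootPairing] at hx'
  exact mem_sup.mpr ⟨x', hx', x - x', mem_perpX.mpr fun β hβ => by simpa using hker ⟨β, hβ⟩,
    add_sub_cancel _ _⟩

lemma Xsub_eq_span (hcomp : R.IsIrreducibleComponent R')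
    (h2 : ∃ α ∈ R', ∃ y : R.Y, R.coroot α = y + y) : R.Xsub R' = span ℤ R' :=
  (eq_of_le_of_inf_le_of_sup_le (z := R.perpX R') span_le_satSpan
    (hcomp.disjoint_Xsub_perpX.eq_bot.le.trans bot_le)
    ((hcomp.codisjoint_span_perpX h2).eq_top.ge.trans' le_top)).symm

lemma mem_Ysub_of_forall_mem_perpX (hcomp : R.IsIrreducibleComponent R')
    (hX : Codisjoint (R.Xsub R') (R.perpX R')) {y : R.Y}
    (hy : ∀ x ∈ R.perpX R', R.pair x y = 0) : y ∈ R.Ysub R' := by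
  set U := span ℤ (R' : Set R.X)
  set V := span ℤ (R.coroot '' R')
  let p : U →ₗ[ℤ] V →ₗ[ℤ] ℤ := R.pairing.compl₁₂ U.subtype V.subtype
  have hp : Function.Injective p := by
    refine (injective_iff_map_eq_zero p).mpr fun u hu => Subtype.ext ?_
    refine hcomp.eq_zero_of_mem_span_of_forall_pair_coroot u.2 fun α hα => ?_
    simpa [p] using LinearMap.congr_fun hu ⟨R.coroot α, subset_span ⟨α, hα, rfl⟩⟩
  have hp' : Function.Injective p.flip := by
    refine (injective_iff_map_eq_zero p.flip).mpr fun v hv => Subtype.ext ?_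
    refine hcomp.eq_zero_of_mem_span_coroot_of_forall_pair v.2 fun α hα => ?_
    simpa [p] using LinearMap.congr_fun hv ⟨α, subset_span hα⟩
  obtain ⟨n, hn, v, hv⟩ := p.exists_smul_mem_range_flip hp hp' ((R.pairing.flip y).comp U.subtype)
  refine ⟨n, hn, ?_⟩
  suffices n • y = v from this ▸ v.2
  rw [← sub_eq_zero]
  refine R.eq_zero_of_forall_pair_eq_zero fun x => ?_
  obtain ⟨x₁, hx₁, x₂, hx₂, rfl⟩ := mem_sup.mp (hX.eq_top ▸ mem_top (x := x))
  have h₁ : R.pair x₁ (n • y - v) = 0 := by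
    refine satSpan_le_ker (f := R.pairing.flip (n • y - v)) (span_le.mpr fun α hα => ?_) hx₁
    have := LinearMap.congr_fun hv ⟨α, subset_span hα⟩
    simp [p] at this ⊢
    linarith
  have h₂ : R.pair x₂ (n • y - v) = 0 := by
    simp [hy x₂ hx₂, pair_eq_zero_of_mem_perpX_of_mem_Ysub hx₂ (span_le_satSpan v.2)]
  simp [h₁, h₂]

lemma codisjoint_Ysub_perpY (hcomp : R.IsIrreducibleComponent R')
    (hX : IsCompl (R.Xsub R') (R.perpX R')) : Codisjoint (R.Ysub R') (R.perpY R') := by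
  rw [codisjoint_iff, eq_top_iff]
  intro y _
  obtain ⟨y', hy', -⟩ := R.pair_perfY
    ((R.pairing.flip y).comp ((R.Xsub R').projection (R.perpX R') hX)).toAddMonoidHom
  refine mem_sup.mpr ⟨y', hcomp.mem_Ysub_of_forall_mem_perpX hX.codisjoint fun x hx => ?_,
    y - y', mem_perpY.mpr fun α hα => ?_, add_sub_cancel _ _⟩
  · simp [hy', projection_apply_of_mem_right hX hx]
  · simp [hy', projection_apply_of_mem_left hX (span_le_satSpan (subset_span hα))]

end IsIrreducibleComponent

end RootDatum

/-- **Proposition.**  Suppose `R = (X, R₀, Y, R₀^∨)` is a root datum and `R₀' ⊆ R₀` is an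
irreducible component of `R₀`.  Put `X' = X ∩ ℝR₀'`, `Y' = Y ∩ ℝ(R₀')^∨`.  Assume that
either (i) `X' = P(R₀')`, or (ii) there exists `α ∈ R₀'` with `α^∨ ∈ 2Y`.  Then
`R' = (X', R₀', Y', (R₀')^∨)` is a root datum which is a direct summand of `R`; in
case (ii), `R'` has type `C_n^{(1)}`. -/
theorem component_direct_summand (R : RootDatum) (R' : Finset R.X)
    (hcomp : R.IsIrreducibleComponent R')
    (h : R.XsubIsWeightLattice R' ∨ ∃ α ∈ R', ∃ y : R.Y, R.coroot α = y + y) :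
    R.IsDirectSummand R' ∧
      ((∃ α ∈ R', ∃ y : R.Y, R.coroot α = y + y) → R.IsTypeC1 R') := by
  have hX : IsCompl (R.Xsub R') (R.perpX R') :=
    ⟨hcomp.disjoint_Xsub_perpX, h.elim (·.codisjoint_Xsub_perpX)
      fun h2 => (hcomp.codisjoint_span_perpX h2).mono_left span_le_satSpan⟩
  have hY : IsCompl (R.Ysub R') (R.perpY R') :=
    ⟨hcomp.disjoint_Ysub_perpY, hcomp.codisjoint_Ysub_perpY hX⟩
  refine ⟨⟨R.perpX R', R.perpY R', hX, hY, fun α hα hαR' => ?_, fun α hα hαR' => ?_,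
    fun _ hx _ hy => RootDatum.pair_eq_zero_of_mem_Xsub_of_mem_perpY hx hy,
    fun _ hx _ hy => RootDatum.pair_eq_zero_of_mem_perpX_of_mem_Ysub hx hy⟩, fun h2 => ⟨?_, ?_⟩⟩
  · exact RootDatum.mem_perpX.mpr fun β hβ => (hcomp.2.2.1 β hβ α hα hαR').2
  · exact RootDatum.mem_perpY.mpr fun β hβ => (hcomp.2.2.1 β hβ α hα hαR').1
  · exact hcomp.Xsub_eq_span h2
  · obtain ⟨α, hα, y, hy⟩ := h2
    exact ⟨α, hα, y, ⟨2, two_ne_zero, by rw [two_smul, ← hy]; exact subset_span ⟨α, hα, rfl⟩⟩, hy⟩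

end SpecCorr
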